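/- Let X ∈ ℝ^{n×d} and X̃ ∈ ℝ^{n×k} be full-column-rank matrices with thin SVDs X = U S V^T and X̃ = Ũ S̃ Ṽ^T. Let y ∈ ℝ^n be a random vector with mean zero and covariance Σ with tr(Σ) > 0. Define the linear regression predictions f_y = X (X^T X)^{-1} X^T y and f̃_y = X̃ (X̃^T X̃)^{-1} X̃^T y. Then E[‖f_y − f̃_y‖²] / E[‖y‖²] = tr((U U^T + Ũ Ũ^T − 2 Ũ Ũ^T U U^T) Σ) / tr(Σ). -/

import Mathlib

/-!
If `Uᵀ U = 1` and `X = U B` with `XᵀX = BᵀB` invertible, then `B` is invertible and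
`X (XᵀX)⁻¹ Xᵀ = U B B⁻¹ B⁻ᵀ Bᵀ Uᵀ = U Uᵀ`, so both predictors are the orthogonal projections
`P = U Uᵀ`, `Q = W Wᵀ` applied to `y`. By linearity of the integral,
`E[(A y)ᵀ(A y)] = tr(AᵀA Σ)`; for `A = P - Q` one has `AᵀA = P + Q - PQ - QP`, and
`tr(PQΣ) = tr(QPΣ)` by transposing, since `P`, `Q`, `Σ` are symmetric.
-/

open Matrix MeasureTheory

namespace Matrix

variable {ι m R : Type*} [Fintype m] [CommRing R]

/-- `hatMatrix X *ᵥ y` is the least-squares prediction `f_y` of the paper. -/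
noncomputable def hatMatrix [Fintype ι] [DecidableEq m] (X : Matrix ι m R) : Matrix ι ι R :=
  X * (Xᵀ * X)⁻¹ * Xᵀ

theorem hatMatrix_mul_of_transpose_mul_self_eq_one [Fintype ι] [DecidableEq m]
    {U : Matrix ι m R} (hU : Uᵀ * U = 1) {B : Matrix m m R}
    (h : IsUnit ((U * B)ᵀ * (U * B)).det) :
    hatMatrix (U * B) = U * Uᵀ := by
  have hgram : (U * B)ᵀ * (U * B) = Bᵀ * B := by
    rw [transpose_mul, Matrix.mul_assoc, ← Matrix.mul_assoc Uᵀ, hU, Matrix.one_mul]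
  rw [hgram, det_mul, det_transpose] at h
  have hB : IsUnit B.det := isUnit_of_mul_isUnit_left h
  have hBt : IsUnit Bᵀ.det := by rwa [det_transpose]
  rw [hatMatrix, hgram, mul_inv_rev, transpose_mul]
  simp only [Matrix.mul_assoc, mul_nonsing_inv_cancel_left _ _ hB,
    nonsing_inv_mul_cancel_left _ _ hBt]

theorem isSymm_mul_transpose (U : Matrix ι m R) : (U * Uᵀ).IsSymm := by
  rw [IsSymm, transpose_mul, transpose_transpose]

theorem mulVec_dotProduct_mulVec_self [Fintype ι] (A : Matrix ι m R) (v : m → R) :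
    (A *ᵥ v) ⬝ᵥ (A *ᵥ v) = ((Aᵀ * A) *ᵥ v) ⬝ᵥ v := by
  rw [← mulVec_mulVec, mulVec_transpose, dotProduct_comm, dotProduct_mulVec]

theorem isIdempotentElem_mul_transpose [Fintype ι] [DecidableEq m] {U : Matrix ι m R}
    (hU : Uᵀ * U = 1) : IsIdempotentElem (U * Uᵀ) := by
  rw [IsIdempotentElem, Matrix.mul_assoc, ← Matrix.mul_assoc Uᵀ, hU, Matrix.one_mul]

theorem trace_transpose_sub_mul_sub_mul [Fintype ι] {P Q C : Matrix ι ι R}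
    (hP : P.IsSymm) (hQ : Q.IsSymm) (hPP : IsIdempotentElem P) (hQQ : IsIdempotentElem Q)
    (hC : C.IsSymm) :
    ((P - Q)ᵀ * (P - Q) * C).trace = ((P + Q - (2 : R) • (Q * P)) * C).trace := by
  have hcomm : (P * Q * C).trace = (Q * P * C).trace := by
    rw [← trace_transpose, transpose_mul, transpose_mul, hP.eq, hQ.eq, hC.eq,
      trace_mul_comm, Matrix.mul_assoc]
  rw [transpose_sub, hP.eq, hQ.eq, Matrix.sub_mul, Matrix.mul_sub, Matrix.mul_sub, hPP.eq,
    hQQ.eq]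
  simp only [Matrix.sub_mul, Matrix.add_mul, Matrix.smul_mul, trace_sub, trace_add, trace_smul,
    hcomm, smul_eq_mul]
  ring

end Matrix

section Moments

variable {ι Ω : Type*} [Fintype ι] [MeasurableSpace Ω] {μ : Measure Ω}

theorem integral_mulVec_dotProduct {y : Ω → ι → ℝ} {C : Matrix ι ι ℝ}
    (hint : ∀ i j, Integrable (fun ω => y ω i * y ω j) μ)
    (hcov : ∀ i j, ∫ ω, y ω i * y ω j ∂μ = C i j) (M : Matrix ι ι ℝ) :
    ∫ ω, (M *ᵥ y ω) ⬝ᵥ y ω ∂μ = (M * C).trace := by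
  have hexpand : ∀ ω, (M *ᵥ y ω) ⬝ᵥ y ω = ∑ i, ∑ j, M i j * (y ω j * y ω i) := fun ω => by
    simp only [dotProduct, mulVec, Finset.sum_mul, mul_assoc]
  simp_rw [hexpand]
  refine (integral_finsetSum _ fun i _ =>
    integrable_finsetSum _ fun j _ => (hint j i).const_mul _).trans ?_
  refine Finset.sum_congr rfl fun i _ => ?_
  rw [integral_finsetSum _ fun j _ => (hint j i).const_mul _]
  simp_rw [integral_const_mul, hcov]
  rfl

end Moments

theorem expected_disagreement_eq_eigenspace_instability_general {n d k : ℕ} {Ω : Type*}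
    [MeasurableSpace Ω] (μ : Measure Ω)
    (X U : Matrix (Fin n) (Fin d) ℝ) (s : Fin d → ℝ) (V : Matrix (Fin d) (Fin d) ℝ)
    (Xt W : Matrix (Fin n) (Fin k) ℝ) (st : Fin k → ℝ) (Vt : Matrix (Fin k) (Fin k) ℝ)
    (hU : Uᵀ * U = 1)
    (hX : X = U * Matrix.diagonal s * Vᵀ) (hrank : IsUnit (Xᵀ * X).det)
    (hW : Wᵀ * W = 1)
    (hXt : Xt = W * Matrix.diagonal st * Vtᵀ) (hrankt : IsUnit (Xtᵀ * Xt).det)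
    (y : Ω → Fin n → ℝ) (C : Matrix (Fin n) (Fin n) ℝ)
    (hint : ∀ i j, Integrable (fun ω => y ω i * y ω j) μ)
    (hcov : ∀ i j, ∫ ω, y ω i * y ω j ∂μ = C i j) :
    (∫ ω, ((X * (Xᵀ * X)⁻¹ * Xᵀ) *ᵥ y ω - (Xt * (Xtᵀ * Xt)⁻¹ * Xtᵀ) *ᵥ y ω) ⬝ᵥ
        ((X * (Xᵀ * X)⁻¹ * Xᵀ) *ᵥ y ω - (Xt * (Xtᵀ * Xt)⁻¹ * Xtᵀ) *ᵥ y ω) ∂μ) /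
      (∫ ω, (y ω) ⬝ᵥ (y ω) ∂μ)
    = ((U * Uᵀ + W * Wᵀ - (2 : ℝ) • (W * Wᵀ * (U * Uᵀ))) * C).trace / C.trace := by
  rw [Matrix.mul_assoc] at hX hXt
  subst hX hXt
  have hP := hatMatrix_mul_of_transpose_mul_self_eq_one hU hrank
  have hQ := hatMatrix_mul_of_transpose_mul_self_eq_one hW hrankt
  have hC : C.IsSymm := IsSymm.ext fun i j => by rw [← hcov, ← hcov, funext fun ω => mul_comm ..]
  unfold hatMatrix at hP hQ
  have hden : ∫ ω, y ω ⬝ᵥ y ω ∂μ = C.trace := by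
    simpa using integral_mulVec_dotProduct hint hcov 1
  rw [hP, hQ, hden]
  simp_rw [← sub_mulVec, mulVec_dotProduct_mulVec_self]
  rw [integral_mulVec_dotProduct hint hcov,
    trace_transpose_sub_mul_sub_mul (isSymm_mul_transpose U) (isSymm_mul_transpose W)
      (isIdempotentElem_mul_transpose hU) (isIdempotentElem_mul_transpose hW) hC]

/-- The normalized expected disagreement between linear regression models trained on two
embeddings equals the eigenspace instability measure. -/
theorem expected_disagreement_eq_eigenspace_instability {n d k : ℕ} {Ω : Type*}
    [MeasurableSpace Ω] (μ : Measure Ω) [IsProbabilityMeasure μ]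
    (X U : Matrix (Fin n) (Fin d) ℝ) (s : Fin d → ℝ) (V : Matrix (Fin d) (Fin d) ℝ)
    (Xt W : Matrix (Fin n) (Fin k) ℝ) (st : Fin k → ℝ) (Vt : Matrix (Fin k) (Fin k) ℝ)
    (hU : Uᵀ * U = 1) (hs : ∀ i, 0 < s i) (hV : Vᵀ * V = 1) (hV' : V * Vᵀ = 1)
    (hX : X = U * Matrix.diagonal s * Vᵀ) (hrank : IsUnit (Xᵀ * X).det)
    (hW : Wᵀ * W = 1) (hst : ∀ i, 0 < st i) (hVt : Vtᵀ * Vt = 1) (hVt' : Vt * Vtᵀ = 1)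
    (hXt : Xt = W * Matrix.diagonal st * Vtᵀ) (hrankt : IsUnit (Xtᵀ * Xt).det)
    (y : Ω → Fin n → ℝ) (C : Matrix (Fin n) (Fin n) ℝ)
    (hint : ∀ i j, Integrable (fun ω => y ω i * y ω j) μ)
    (hmean : ∀ i, ∫ ω, y ω i ∂μ = 0)
    (hcov : ∀ i j, ∫ ω, y ω i * y ω j ∂μ = C i j)
    (htr : 0 < C.trace) :
    (∫ ω, ((X * (Xᵀ * X)⁻¹ * Xᵀ) *ᵥ y ω - (Xt * (Xtᵀ * Xt)⁻¹ * Xtᵀ) *ᵥ y ω) ⬝ᵥ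
        ((X * (Xᵀ * X)⁻¹ * Xᵀ) *ᵥ y ω - (Xt * (Xtᵀ * Xt)⁻¹ * Xtᵀ) *ᵥ y ω) ∂μ) /
      (∫ ω, (y ω) ⬝ᵥ (y ω) ∂μ)
    = ((U * Uᵀ + W * Wᵀ - (2 : ℝ) • (W * Wᵀ * (U * Uᵀ))) * C).trace / C.trace :=
  expected_disagreement_eq_eigenspace_instability_general μ X U s V Xt W st Vt hU hX hrank hW hXt
    hrankt y C hint hcov
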